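/- Let φ_1,…,φ_r be symmetric polynomials of the shape φ_j(z) = a_j σ_{k_j}(z) − Υ_j(σ_{l_1}(z),…,σ_{l_R}(z)) with a_j nonzero integers and Υ_j ∈ ℤ[s_1,…,s_R]. Suppose x, y ∈ ℤ^k satisfy φ_j(x) = φ_j(y) for 1 ≤ j ≤ r, and set h = (σ_{l_1}(x),…,σ_{l_R}(x)) and g = (σ_{l_1}(y),…,σ_{l_R}(y)). Then for each index j with 1 ≤ j ≤ k one has A·∏_{i=1}^k (x_i − y_j) = Ψ(−y_j;h) − Ψ(−y_j;g). -/

import Mathlib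

open Finset Asymptotics Filter

/-- The elementary symmetric polynomial `σ_l` evaluated at the integer tuple `x`. -/
def esymm (k l : ℕ) (x : Fin k → ℤ) : ℤ :=
  ∑ s ∈ Finset.powersetCard l (Finset.univ : Finset (Fin k)), ∏ i ∈ s, x i

/-- The number of pairs `(x, y)` of integer `k`-tuples with all entries in `[1, X]`
satisfying the relation `P`. -/
noncomputable def pairCount (k X : ℕ) (P : (Fin k → ℤ) → (Fin k → ℤ) → Prop) : ℕ :=
  Nat.card {p : (Fin k → ℤ) × (Fin k → ℤ) //
    (∀ i, 1 ≤ p.1 i ∧ p.1 i ≤ (X : ℤ)) ∧ (∀ i, 1 ≤ p.2 i ∧ p.2 i ≤ (X : ℤ)) ∧ P p.1 p.2}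

/-- `T_k(X)`: the number of pairs `(x, y)` of integer `k`-tuples with entries in `[1, X]`
for which `y` is a permutation of `x`. -/
noncomputable def permCount (k X : ℕ) : ℕ :=
  pairCount k X (fun x y => ∃ π : Equiv.Perm (Fin k), y = x ∘ π)

/-- The complementary set of exponents `ℛ = {1,…,k} \ {k_1,…,k_r}`. -/
def compSet (k r : ℕ) (kk : Fin r → ℕ) : Finset ℕ :=
  Finset.Icc 1 k \ Finset.image kk Finset.univ

/-- The auxiliary polynomial `Ψ(t; e) = A Σ_{m} e_m t^{k−l_m} + Σ_j c_j t^{k−k_j} Υ_j(e)`,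
where `A = a_1 ⋯ a_r` and `c_j = A / a_j`. -/
noncomputable def PsiN (k r : ℕ) (kk : Fin r → ℕ) (a : Fin r → ℤ)
    (Υ : Fin r → MvPolynomial {l // l ∈ compSet k r kk} ℤ)
    (e : {l // l ∈ compSet k r kk} → ℤ) (t : ℤ) : ℤ :=
  (∏ j, a j) * (∑ l : {l // l ∈ compSet k r kk}, e l * t ^ (k - l.1)) +
    ∑ j, (∏ i ∈ Finset.univ.erase j, a i) * t ^ (k - kk j) * MvPolynomial.eval e (Υ j)

/- Put `t = -y_j`. Since `∏ (t + y_i)` vanishes, `∏ (x_i - y_j)` equals `∏ (t + x_i) - ∏ (t + y_i)`,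
that is `Σ_l (σ_l(x) - σ_l(y)) t^(k-l)`. The exponents `1, …, k` split into `ℛ` and the `k_j`.
The terms with `l ∈ ℛ` form the first part of `Ψ(t;h) - Ψ(t;g)`; the relations `φ_j(x) = φ_j(y)`
give `Υ_j(h) - Υ_j(g) = a_j (σ_{k_j}(x) - σ_{k_j}(y))`, and `c_j a_j = A` turns the second part
into the remaining terms. -/

lemma esymm_zero (k : ℕ) (x : Fin k → ℤ) : esymm k 0 x = 1 := by
  simp [esymm]

lemma prod_add_eq_sum_esymm (k : ℕ) (x : Fin k → ℤ) (t : ℤ) :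
    ∏ i, (t + x i) = ∑ l ∈ range (k + 1), esymm k l x * t ^ (k - l) := by
  have h := congrArg (Polynomial.eval t)
    (Multiset.prod_X_add_C_eq_sum_esymm (univ.val.map x))
  simp only [Polynomial.eval_multiset_prod, Multiset.map_map, Function.comp_def,
    Polynomial.eval_add, Polynomial.eval_X, Polynomial.eval_C, Polynomial.eval_finsetSum,
    Polynomial.eval_mul, Polynomial.eval_pow, Multiset.card_map, card_val, card_univ,
    Fintype.card_fin, esymm_map_val] at h
  exact h

lemma prod_sub_eq_sum_esymm_sub (k : ℕ) (x y : Fin k → ℤ) (j : Fin k) :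
    ∏ i, (x i - y j) =
      ∑ l ∈ range (k + 1), (esymm k l x - esymm k l y) * (-y j) ^ (k - l) := by
  have hy : ∏ i, (-y j + y i) = 0 := prod_eq_zero (mem_univ j) (neg_add_cancel _)
  simp only [sub_mul, sum_sub_distrib, ← prod_add_eq_sum_esymm, hy, sub_zero]
  exact prod_congr rfl fun i _ => by ring

lemma mem_Icc_of_strictMono {k r : ℕ} (hr : 0 < r) {kk : Fin r → ℕ} (hmono : StrictMono kk)
    (hfirst : 1 ≤ kk ⟨0, hr⟩) (hlast : kk ⟨r - 1, Nat.sub_lt hr Nat.one_pos⟩ = k) (j : Fin r) :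
    kk j ∈ Icc 1 k := by
  refine mem_Icc.mpr ⟨hfirst.trans (hmono.monotone ?_), hlast ▸ hmono.monotone ?_⟩ <;>
    exact Fin.mk_le_mk.mpr (by omega)

lemma sum_range_succ_eq_sum_compSet_add {M : Type*} [AddCommMonoid M] {k r : ℕ}
    {kk : Fin r → ℕ} (hinj : Function.Injective kk) (hkk : ∀ j, kk j ∈ Icc 1 k)
    (f : ℕ → M) (hf : f 0 = 0) :
    ∑ l ∈ range (k + 1), f l = ∑ l ∈ compSet k r kk, f l + ∑ j, f (kk j) := by
  have hrange : range (k + 1) = insert 0 (Icc 1 k) := by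
    ext m; simp only [mem_range, mem_insert, mem_Icc]; omega
  have hsub : image kk univ ⊆ Icc 1 k := by
    simpa only [image_subset_iff, mem_univ, true_implies] using hkk
  rw [hrange, sum_insert (by simp), hf, zero_add, ← sdiff_union_of_subset hsub,
    sum_union sdiff_disjoint, sum_image fun i _ i' _ hi => hinj hi, compSet]

lemma PsiN_sub_PsiN (k r : ℕ) (kk : Fin r → ℕ) (a : Fin r → ℤ)
    (Υ : Fin r → MvPolynomial {l // l ∈ compSet k r kk} ℤ)
    (h g : {l // l ∈ compSet k r kk} → ℤ) (d : Fin r → ℤ)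
    (hΥ : ∀ j, MvPolynomial.eval h (Υ j) - MvPolynomial.eval g (Υ j) = a j * d j) (t : ℤ) :
    PsiN k r kk a Υ h t - PsiN k r kk a Υ g t =
      (∏ i, a i) * (∑ l : {l // l ∈ compSet k r kk}, (h l - g l) * t ^ (k - l.1) +
        ∑ j, d j * t ^ (k - kk j)) := by
  have hc : ∀ j, (∏ i ∈ univ.erase j, a i) * (MvPolynomial.eval h (Υ j) -
      MvPolynomial.eval g (Υ j)) = (∏ i, a i) * d j := fun j => by
    rw [hΥ, ← mul_prod_erase univ a (mem_univ j)]; ring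
  rw [PsiN, PsiN, add_sub_add_comm, ← mul_sub, ← sum_sub_distrib, ← sum_sub_distrib, mul_add]
  congr 1
  · exact congrArg _ (sum_congr rfl fun l _ => by ring)
  · rw [mul_sum]
    exact sum_congr rfl fun j _ => by linear_combination t ^ (k - kk j) * hc j

theorem multiplicative_relation_nonlinear_evaluated_general (k r : ℕ) (hr : 0 < r)
    (kk : Fin r → ℕ)
    (hmono : StrictMono kk) (hfirst : 1 ≤ kk ⟨0, hr⟩)
    (hlast : kk ⟨r - 1, Nat.sub_lt hr Nat.one_pos⟩ = k)
    (a : Fin r → ℤ)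
    (Υ : Fin r → MvPolynomial {l // l ∈ compSet k r kk} ℤ)
    (x y : Fin k → ℤ)
    (heq : ∀ j,
      a j * esymm k (kk j) x - MvPolynomial.eval (fun l => esymm k l.1 x) (Υ j) =
        a j * esymm k (kk j) y - MvPolynomial.eval (fun l => esymm k l.1 y) (Υ j))
    (h g : {l // l ∈ compSet k r kk} → ℤ)
    (hh : ∀ l, h l = esymm k l.1 x) (hg : ∀ l, g l = esymm k l.1 y) :
    ∀ j : Fin k,
      (∏ i, a i) * (∏ i, (x i - y j)) =
        PsiN k r kk a Υ h (-(y j)) - PsiN k r kk a Υ g (-(y j)) := by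
  obtain rfl : h = _ := funext hh
  obtain rfl : g = _ := funext hg
  intro j
  have hΥ : ∀ j', MvPolynomial.eval (fun l => esymm k l.1 x) (Υ j') -
      MvPolynomial.eval (fun l => esymm k l.1 y) (Υ j') =
        a j' * (esymm k (kk j') x - esymm k (kk j') y) := fun j' => by
    linear_combination -heq j'
  rw [PsiN_sub_PsiN k r kk a Υ _ _ _ hΥ, prod_sub_eq_sum_esymm_sub,
    sum_range_succ_eq_sum_compSet_add hmono.injective
      (mem_Icc_of_strictMono hr hmono hfirst hlast) _ (by simp [esymm_zero]),
    ← sum_coe_sort (compSet k r kk)]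

/-- The relation (3.5). If `x, y ∈ ℤ^k` satisfy `φ_j(x) = φ_j(y)` for `1 ≤ j ≤ r`, where
`φ_j(z) = a_j σ_{k_j}(z) − Υ_j(σ_{l_1}(z),…,σ_{l_R}(z))`, and
`h = (σ_{l_1}(x),…,σ_{l_R}(x))`, `g = (σ_{l_1}(y),…,σ_{l_R}(y))`, then for each
`1 ≤ j ≤ k` one has `A ∏_{i=1}^k (x_i − y_j) = Ψ(−y_j;h) − Ψ(−y_j;g)`. -/
theorem multiplicative_relation_nonlinear_evaluated (k r : ℕ) (hr : 0 < r)
    (kk : Fin r → ℕ)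
    (hmono : StrictMono kk) (hfirst : 1 ≤ kk ⟨0, hr⟩)
    (hlast : kk ⟨r - 1, Nat.sub_lt hr Nat.one_pos⟩ = k)
    (a : Fin r → ℤ) (ha : ∀ j, a j ≠ 0)
    (Υ : Fin r → MvPolynomial {l // l ∈ compSet k r kk} ℤ)
    (x y : Fin k → ℤ)
    (heq : ∀ j,
      a j * esymm k (kk j) x - MvPolynomial.eval (fun l => esymm k l.1 x) (Υ j) =
        a j * esymm k (kk j) y - MvPolynomial.eval (fun l => esymm k l.1 y) (Υ j))
    (h g : {l // l ∈ compSet k r kk} → ℤ)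
    (hh : ∀ l, h l = esymm k l.1 x) (hg : ∀ l, g l = esymm k l.1 y) :
    ∀ j : Fin k,
      (∏ i, a i) * (∏ i, (x i - y j)) =
        PsiN k r kk a Υ h (-(y j)) - PsiN k r kk a Υ g (-(y j)) :=
  multiplicative_relation_nonlinear_evaluated_general k r hr kk hmono hfirst hlast a Υ x y heq h g
    hh hg
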